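/- Let (P₂,Q₂) and (P₁,Q₁) be pairs of disjoint inhabited subsets of ℕ. If (P₂,Q₂) is many-one reducible to (P₁,Q₁), then there exists a winning Arthur+Nimue strategy with partial computable Arthur strategy for the reduction game of the basic oracle {P₁, Q₁} to the basic oracle {P₂, Q₂} (i.e. the coding degree c_{P₁,Q₁} is below c_{P₂,Q₂}). -/

import Mathlib

open Classical in
/-- The oracle game: the list of previous answers by Merlin up to stage `i`,
for the answer sequence `s`. -/
def prefixList (s : ℕ → ℕ) (i : ℕ) : List ℕ := List.ofFn (fun j : Fin i => s j)

/-- A winning Arthur+Nimue strategy for the reduction game of the basic oracle `ℱ`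
to the basic oracle `𝒢`. -/
def Winning (ℱ 𝒢 : Set (Set ℕ)) (σ : List ℕ →. Option ℕ) (ν : Set ℕ → List ℕ → Set ℕ) : Prop :=
  (∀ F ∈ ℱ, ∀ l : List ℕ, ν F l ∈ 𝒢) ∧
  ∀ F ∈ ℱ, ∀ s : ℕ → ℕ, (∀ i, s i ∈ ν F (prefixList s i)) →
    ∃ k, (∀ i ≤ k, (σ (prefixList s i)).Dom) ∧
      (∀ i < k, none ∈ σ (prefixList s i)) ∧
      ∃ u ∈ F, some u ∈ σ (prefixList s k)

/-- The encoding of an Arthur strategy as a partial function `ℕ →. ℕ`, via the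
standard Mathlib encodings of `List ℕ` and `Option ℕ`. -/
def arthurCode (σ : List ℕ →. Option ℕ) : ℕ →. ℕ :=
  fun n => (σ (Denumerable.ofNat (List ℕ) n)).map Encodable.encode

open Classical in
/-- The decoding oracle associated to the promise problem `(P, Q)`: value `0` on `P`,
value `1` on `Q`, undefined elsewhere. -/
noncomputable def dOracle (P Q : Set ℕ) : ℕ →. ℕ :=
  fun n => ⟨n ∈ P ∪ Q, fun _ => if n ∈ Q then 1 else 0⟩

open Classical in
/-- The characteristic function of a set of naturals. -/
noncomputable def chi (A : Set ℕ) : ℕ → ℕ := fun n => if n ∈ A then 1 else 0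

/-- The coded cartesian product of two sets of naturals. -/
def tensor (P Q : Set ℕ) : Set ℕ := {x | ∃ p ∈ P, ∃ q ∈ Q, x = Nat.pair p q}

infixl:70 " ⊗ " => tensor

/-- Oracle computability, as in Mathlib's `Nat.RecursiveIn`. -/
inductive Nat.RecursiveInFn (g : ℕ →. ℕ) : (ℕ →. ℕ) → Prop
  | zero : Nat.RecursiveInFn g fun _ => 0
  | succ : Nat.RecursiveInFn g Nat.succ
  | left : Nat.RecursiveInFn g fun n => (Nat.unpair n).1
  | right : Nat.RecursiveInFn g fun n => (Nat.unpair n).2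
  | oracle : Nat.RecursiveInFn g g
  | pair {f h : ℕ →. ℕ} (hf : Nat.RecursiveInFn g f) (hh : Nat.RecursiveInFn g h) :
      Nat.RecursiveInFn g fun n => (Nat.pair <$> f n <*> h n)
  | comp {f h : ℕ →. ℕ} (hf : Nat.RecursiveInFn g f) (hh : Nat.RecursiveInFn g h) :
      Nat.RecursiveInFn g fun n => h n >>= f
  | prec {f h : ℕ →. ℕ} (hf : Nat.RecursiveInFn g f) (hh : Nat.RecursiveInFn g h) :
      Nat.RecursiveInFn g
        (Nat.unpaired fun a n =>
          n.rec (f a) fun y IH => do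
            let i ← IH
            h (Nat.pair a (Nat.pair y i)))
  | rfind {f : ℕ →. ℕ} (hf : Nat.RecursiveInFn g f) :
      Nat.RecursiveInFn g fun a =>
        Nat.rfind fun n => (fun m => m = 0) <$> f (Nat.pair a n)

/-- `f` is T1-reducible to `g`: some partial function recursive in the oracle `g`
extends `f`. -/
def T1Reducible (f g : ℕ →. ℕ) : Prop :=
  ∃ h : ℕ →. ℕ, Nat.RecursiveInFn g h ∧ ∀ n : ℕ, ∀ a ∈ f n, a ∈ h n

/-- `f` is T1-computable: it has a partial computable extension. -/
def T1Computable (f : ℕ →. ℕ) : Prop :=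
  ∃ h : ℕ →. ℕ, Nat.Partrec h ∧ ∀ n : ℕ, ∀ a ∈ f n, a ∈ h n

/-- Codes for oracle computations: Mathlib's `Nat.Partrec.Code` extended by an
`oracle` constructor. -/
inductive OCode : Type
  | zero : OCode
  | succ : OCode
  | left : OCode
  | right : OCode
  | oracle : OCode
  | pair : OCode → OCode → OCode
  | comp : OCode → OCode → OCode
  | prec : OCode → OCode → OCode
  | rfind' : OCode → OCode

/-- Evaluation of an oracle code relative to the oracle `g`, by the same structural
recursion as Mathlib's `Nat.Partrec.Code.eval`. -/
def OCode.eval (g : ℕ →. ℕ) : OCode → ℕ →. ℕ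
  | .zero => pure 0
  | .succ => Nat.succ
  | .left => ↑fun n : ℕ => n.unpair.1
  | .right => ↑fun n : ℕ => n.unpair.2
  | .oracle => g
  | .pair cf cg => fun n => Nat.pair <$> cf.eval g n <*> cg.eval g n
  | .comp cf cg => fun n => cg.eval g n >>= cf.eval g
  | .prec cf cg =>
    Nat.unpaired fun a n =>
      n.rec (cf.eval g a) fun y IH => do
        let i ← IH
        cg.eval g (Nat.pair a (Nat.pair y i))
  | .rfind' cf =>
    Nat.unpaired fun a m =>
      (Nat.rfind fun n => (fun m => m = 0) <$> cf.eval g (Nat.pair a (n + m))).map (· + m)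

/-- The `n`-th oracle code. -/
def OCode.ofNat : ℕ → OCode
  | 0 => .zero
  | 1 => .succ
  | 2 => .left
  | 3 => .right
  | 4 => .oracle
  | n + 5 =>
    have h1 : (n / 4).unpair.1 < n + 5 :=
      lt_of_le_of_lt (le_trans (Nat.unpair_left_le _) (Nat.div_le_self _ _)) (by omega)
    have h2 : (n / 4).unpair.2 < n + 5 :=
      lt_of_le_of_lt (le_trans (Nat.unpair_right_le _) (Nat.div_le_self _ _)) (by omega)
    if n % 4 = 0 then .pair (OCode.ofNat (n / 4).unpair.1) (OCode.ofNat (n / 4).unpair.2)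
    else if n % 4 = 1 then .comp (OCode.ofNat (n / 4).unpair.1) (OCode.ofNat (n / 4).unpair.2)
    else if n % 4 = 2 then .prec (OCode.ofNat (n / 4).unpair.1) (OCode.ofNat (n / 4).unpair.2)
    else .rfind' (OCode.ofNat (n / 4).unpair.1)

/-- `φ_e^g`: the evaluation of the `e`-th oracle code relative to the oracle `g`. -/
def phi (g : ℕ →. ℕ) (e : ℕ) : ℕ →. ℕ := (OCode.ofNat e).eval g

/-- `H_i^A`: the set of (codes of) oracle programs which, run with the characteristic
function of `A` as oracle, halt on input `0` with output `i`. -/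
def Hset (A : Set ℕ) (i : ℕ) : Set ℕ := {e : ℕ | (i : ℕ) ∈ phi (chi A) e 0}

/-- Many-one reducibility of promise problems: `(P₂,Q₂)` is many-one reducible to
`(P₁,Q₁)` via a partial computable function defined on all of `P₂ ∪ Q₂`. -/
def PromiseMRed (P₂ Q₂ P₁ Q₁ : Set ℕ) : Prop :=
  ∃ f : ℕ →. ℕ, Nat.Partrec f ∧ (∀ n ∈ P₂ ∪ Q₂, (f n).Dom) ∧
    (∀ n ∈ P₂, ∀ a ∈ f n, a ∈ P₁) ∧ (∀ n ∈ Q₂, ∀ a ∈ f n, a ∈ Q₁)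

/-! Arthur asks Merlin a single question, which Nimue answers by a point of `P₂` when the secret
is `P₁` and of `Q₂` otherwise, and Arthur declares the image of that answer under the reduction. -/

def oneQueryArthur (f : ℕ →. ℕ) : List ℕ →. Option ℕ :=
  fun l => Option.casesOn l.head? (Part.some none) fun a => (f a).map some

theorem partrec_oneQueryArthur {f : ℕ →. ℕ} (hf : Nat.Partrec f) :
    Partrec (oneQueryArthur f) :=
  Partrec.optionCasesOn_right Primrec.list_head?.to_comp (Computable.const none)
    (((Partrec.nat_iff.2 hf).comp Computable.snd).map
      (Computable.option_some.comp Computable.snd).to₂).to₂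

theorem prefixList_one (s : ℕ → ℕ) : prefixList s 1 = [s 0] := by
  simp [prefixList]

theorem winning_oneQueryArthur {ℱ 𝒢 : Set (Set ℕ)} {f : ℕ →. ℕ} (ν : Set ℕ → Set ℕ)
    (hν : ∀ F ∈ ℱ, ν F ∈ 𝒢) (hf : ∀ F ∈ ℱ, ∀ n ∈ ν F, ∃ u ∈ F, u ∈ f n) :
    Winning ℱ 𝒢 (oneQueryArthur f) fun F _ => ν F := by
  refine ⟨fun F hF _ => hν F hF, fun F hF s hs => ?_⟩
  obtain ⟨u, huF, hu⟩ := hf F hF (s 0) (hs 0)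
  have hquery : none ∈ oneQueryArthur f (prefixList s 0) := Part.mem_some none
  have hanswer : some u ∈ oneQueryArthur f (prefixList s 1) := by
    rw [prefixList_one]
    exact Part.mem_map some hu
  refine ⟨1, fun i hi => ?_, fun i hi => ?_, u, huF, hanswer⟩
  · obtain rfl | rfl : i = 0 ∨ i = 1 := by omega
    exacts [Part.dom_iff_mem.2 ⟨_, hquery⟩, Part.dom_iff_mem.2 ⟨_, hanswer⟩]
  · obtain rfl : i = 0 := by omega
    exact hquery

theorem stmt10_general (P₂ Q₂ P₁ Q₁ : Set ℕ)
    (hred : PromiseMRed P₂ Q₂ P₁ Q₁) :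
    ∃ (σ : List ℕ →. Option ℕ) (ν : Set ℕ → List ℕ → Set ℕ),
      Partrec σ ∧ Winning {P₁, Q₁} {P₂, Q₂} σ ν := by
  classical
  obtain ⟨f, hf, hdom, hfP, hfQ⟩ := hred
  refine ⟨oneQueryArthur f, _, partrec_oneQueryArthur hf,
    winning_oneQueryArthur (fun F => if F = P₁ then P₂ else Q₂) ?_ ?_⟩
  · intro F _
    split_ifs <;> simp
  · rintro F hF n hn
    have hdomn : (f n).Dom := hdom n (by split_ifs at hn <;> simp [hn])
    refine ⟨_, ?_, Part.get_mem hdomn⟩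
    split_ifs at hn with hP
    · exact hP ▸ hfP n hn _ (Part.get_mem hdomn)
    · have hQ : F = Q₁ := hF.resolve_left hP
      exact hQ ▸ hfQ n hn _ (Part.get_mem hdomn)

theorem stmt10 (P₂ Q₂ P₁ Q₁ : Set ℕ)
    (hd2 : Disjoint P₂ Q₂) (hP2 : P₂.Nonempty) (hQ2 : Q₂.Nonempty)
    (hd1 : Disjoint P₁ Q₁) (hP1 : P₁.Nonempty) (hQ1 : Q₁.Nonempty)
    (hred : PromiseMRed P₂ Q₂ P₁ Q₁) :
    ∃ (σ : List ℕ →. Option ℕ) (ν : Set ℕ → List ℕ → Set ℕ),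
      Partrec σ ∧ Winning {P₁, Q₁} {P₂, Q₂} σ ν :=
  stmt10_general P₂ Q₂ P₁ Q₁ hred
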